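/- arXiv:2411.10299 — 3 statements merged into one kernel-verified Lean document; each statement's English description precedes it below -/
import Mathlib

section
/- Let q be an odd prime power and let G ≅ PGL(2,q) be the stabilizer of a non-degenerate conic O in PG(2,q). The map sending an involution of G to its center is a bijection between the set of involutions of G and the set of points of PG(2,q) not on O. -/
/-!
An involution of the stabiliser is induced by a linear map `g` with `g ∘ g` scalar. The dimension
being odd, a multiple of `g` (fixed by `det g`) is a linear involution `h ≠ ±1`, and up to replacing
`h` by `-h` its `-1`- and `1`-eigenspaces are a line `⟨p⟩` and a plane `E`. Since `h` preserves
isotropy, comparing `Q (α • p + w)` with `Q (-α • p + w)` shows that an isotropic `α • p + w` with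
`α ≠ 0`, `w ∈ E` has `polar Q p w = 0`. Over a finite field of odd order a quadratic in one variable
plus a quadratic in another always has a zero, and this yields such a vector with
`polar Q p w ≠ 0` unless `E ⊆ p^⊥`. Hence `Q p ≠ 0` and `h` is the orthogonal reflection in `p`,
whose centre is `⟨p⟩`. Conversely the reflection in a point off the conic lies in the stabiliser,
and two reflections inducing the same projectivity agree on a common perpendicular vector, hence
are equal and have the same centre.
-/

open Projectivization

variable {F : Type} [Field F]

/-- The projective plane `PG(2,q)` over `F`. -/
abbrev Pt (F : Type) [Field F] := Projectivization F (Fin 3 → F)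

/-- A permutation of the plane is a projectivity if it is induced by a linear automorphism. -/
def IsProjy (φ : Equiv.Perm (Pt F)) : Prop :=
  ∃ g : (Fin 3 → F) ≃ₗ[F] (Fin 3 → F),
    ∀ x : Pt F, φ x = Projectivization.map (g : (Fin 3 → F) →ₗ[F] (Fin 3 → F)) g.injective x

/-- Lines of the projective plane: zero sets of nonzero linear forms. -/
def IsLine (L : Set (Pt F)) : Prop :=
  ∃ f : (Fin 3 → F) →ₗ[F] F, f ≠ 0 ∧ L = {x : Pt F | f x.rep = 0}

lemma map_map (g h : (Fin 3 → F) ≃ₗ[F] (Fin 3 → F)) (x : Pt F) :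
    Projectivization.map ((h.trans g) : (Fin 3 → F) →ₗ[F] (Fin 3 → F)) (h.trans g).injective x =
      Projectivization.map (g : (Fin 3 → F) →ₗ[F] (Fin 3 → F)) g.injective
        (Projectivization.map (h : (Fin 3 → F) →ₗ[F] (Fin 3 → F)) h.injective x) := by
  induction x using Projectivization.ind with
  | h v hv => rfl

/-- The subgroup of `Perm (PG(2,q))` of projectivities stabilizing a set `O` (the conic). -/
def ConicStab (O : Set (Pt F)) : Subgroup (Equiv.Perm (Pt F)) where
  carrier := {φ | IsProjy φ ∧ ∀ x, φ x ∈ O ↔ x ∈ O}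
  one_mem' := by
    refine ⟨⟨LinearEquiv.refl F _, fun x => ?_⟩, fun x => Iff.rfl⟩
    have : ((LinearEquiv.refl F (Fin 3 → F)) : (Fin 3 → F) →ₗ[F] (Fin 3 → F)) = LinearMap.id := rfl
    simp only [this, Projectivization.map_id]
    rfl
  mul_mem' := by
    rintro a b ⟨⟨g, hg⟩, ha⟩ ⟨⟨h, hh⟩, hb⟩
    refine ⟨⟨h.trans g, fun x => ?_⟩, fun x => (ha _).trans (hb x)⟩
    rw [map_map]
    simp [Equiv.Perm.mul_apply, hg, hh]
  inv_mem' := by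
    rintro a ⟨⟨g, hg⟩, ha⟩
    constructor
    · refine ⟨g.symm, fun x => ?_⟩
      have key : a (Projectivization.map (g.symm : (Fin 3 → F) →ₗ[F] (Fin 3 → F))
          g.symm.injective x) = x := by
        rw [hg]
        induction x using Projectivization.ind with
        | h v hv =>
          rw [Projectivization.map_mk, Projectivization.map_mk]
          exact (Projectivization.mk_eq_mk_iff F _ _ _ hv).2 ⟨1, by simp⟩
      calc a⁻¹ x = a⁻¹ (a (Projectivization.map _ g.symm.injective x)) := by rw [key]
        _ = _ := by simp
    · intro x
      have := ha (a⁻¹ x)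
      simpa using this.symm

/-- The subgroup of permutations stabilizing a set. -/
def SetStab (S : Set (Pt F)) : Subgroup (Equiv.Perm (Pt F)) where
  carrier := {φ | ∀ x, φ x ∈ S ↔ x ∈ S}
  one_mem' := fun _ => Iff.rfl
  mul_mem' := fun ha hb x => (ha _).trans (hb x)
  inv_mem' := by
    intro a ha x
    have := ha (a⁻¹ x)
    simpa using this.symm

/-- `C` is a center of the perspectivity `φ`: every line through `C` is stabilized. -/
def IsCenterOf (φ : Equiv.Perm (Pt F)) (C : Pt F) : Prop :=
  ∀ L : Set (Pt F), IsLine L → C ∈ L → ∀ y, φ y ∈ L ↔ y ∈ L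

/-- `φ` is a perspectivity: it has a center and an axis (a line fixed pointwise). -/
def IsPerspectivity (φ : Equiv.Perm (Pt F)) : Prop :=
  ∃ (C : Pt F) (l : Set (Pt F)), IsLine l ∧ IsCenterOf φ C ∧ ∀ x ∈ l, φ x = x

/-- `φ` is the involution of the stabilizer of `O` with center `P`. -/
def IsInvolWithCenter (O : Set (Pt F)) (φ : Equiv.Perm (Pt F)) (P : Pt F) : Prop :=
  φ ∈ ConicStab O ∧ φ ^ 2 = 1 ∧ φ ≠ 1 ∧ IsCenterOf φ P

open Module Module.End QuadraticMap
open scoped LinearAlgebra.Projectivization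

section

variable {V : Type*} [AddCommGroup V] [Module F V]

namespace Projectivization

theorem smul_eq_smul_iff {g g' : V ≃ₗ[F] V} :
    (∀ x : ℙ F V, g • x = g' • x) ↔ ∃ c : F, ∀ v, g v = c • g' v := by
  constructor
  · intro h
    obtain ⟨c, hc⟩ := LinearMap.exists_eq_smul_id_of_forall_notLinearIndependent
      (f := ((g'⁻¹ * g : V ≃ₗ[F] V) : Module.End F V)) fun v ↦ by
        by_cases hv : v = 0
        · simp [hv, linearIndependent_fin2]
        · have := h (mk F v hv)
          rw [← inv_smul_eq_iff, ← mul_smul] at this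
          simpa [LinearIndependent.pair_iff' hv, mk_eq_mk_iff'] using this
    exact ⟨c, fun v ↦ by simpa using congrArg g' (LinearMap.congr_fun hc v)⟩
  · rintro ⟨c, hc⟩ x
    induction x using Projectivization.ind with
    | h v hv =>
      simp only [smul_mk, mk_eq_mk_iff']
      exact ⟨c, (hc v).symm⟩

end Projectivization

lemma LinearMap.map_mk_rep_eq_zero_iff (f : V →ₗ[F] F) {v : V} (hv : v ≠ 0) :
    f (Projectivization.mk F v hv).rep = 0 ↔ f v = 0 := by
  obtain ⟨a, ha⟩ := exists_smul_eq_mk_rep F v hv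
  simp [← ha, Units.smul_def]

namespace Module.End

lemma isCompl_eigenspace_one_neg_one {h : End F V} (h2 : (2 : F) ≠ 0)
    (hh : ∀ v, h (h v) = v) : IsCompl (eigenspace h 1) (eigenspace h (-1)) where
  disjoint := by
    refine Submodule.disjoint_def.2 fun v hp hm ↦ ?_
    rw [mem_eigenspace_iff] at hp hm
    refine (smul_eq_zero.1 (?_ : (2 : F) • v = 0)).resolve_left h2
    linear_combination (norm := module) hm - hp
  codisjoint := by
    refine codisjoint_iff.2 (Submodule.eq_top_iff'.2 fun v ↦ Submodule.mem_sup.2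
      ⟨(2 : F)⁻¹ • (v + h v), ?_, (2 : F)⁻¹ • (v - h v), ?_, ?_⟩)
    · rw [mem_eigenspace_iff, map_smul, map_add, hh]
      module
    · rw [mem_eigenspace_iff, map_smul, map_sub, hh]
      module
    · rw [← smul_add, add_add_sub_cancel, ← two_smul F, smul_smul, inv_mul_cancel₀ h2, one_smul]

lemma eigenspace_neg (h : End F V) (μ : F) : eigenspace (-h) μ = eigenspace h (-μ) := by
  ext v
  simp [neg_eq_iff_eq_neg]

end Module.End

theorem LinearEquiv.exists_smul_involutive [FiniteDimensional F V] (hV : Odd (finrank F V))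
    (g : V ≃ₗ[F] V) {a : F} (hg : ∀ v, g (g v) = a • v) :
    ∃ s : F, s ≠ 0 ∧ ∀ v, s • g (s • g v) = v := by
  obtain ⟨k, hk⟩ := hV
  have hd : LinearMap.det (g : Module.End F V) ≠ 0 := g.isUnit_det'.ne_zero
  have hdet : LinearMap.det (g : Module.End F V) ^ 2 = a ^ (2 * k + 1) := by
    have : (g : Module.End F V) ∘ₗ g = a • LinearMap.id := LinearMap.ext hg
    rw [_root_.sq, ← LinearMap.det_comp, this, LinearMap.det_smul, LinearMap.det_id, hk, mul_one]
  have ha : a ≠ 0 := by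
    rintro rfl
    exact hd (pow_eq_zero_iff two_ne_zero |>.1 (by simpa using hdet))
  -- `s = a ^ k / det g` works because `det g ^ 2 = a ^ (2 * k + 1)`.
  refine ⟨a ^ k / LinearMap.det (g : Module.End F V), div_ne_zero (pow_ne_zero k ha) hd,
    fun v ↦ ?_⟩
  rw [map_smul, hg, smul_smul, smul_smul]
  convert one_smul F v
  field_simp
  linear_combination -hdet

open Polynomial in
lemma FiniteField.exists_ne_zero_quadratic_add_quadratic_eq_zero [Fintype F] (hF : ringChar F ≠ 2)
    {a b c d e : F} (hb : b ≠ 0) (he : e ≠ 0) :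
    ∃ α t : F, α ≠ 0 ∧ a * α ^ 2 + b * α + c + (d * t ^ 2 + e * t) = 0 := by
  have h2 : (2 : F) ≠ 0 := Ring.two_ne_zero hF
  by_cases hd : d = 0
  · exact ⟨1, -(a + b + c) / e, one_ne_zero, by subst hd; field_simp; ring⟩
  by_cases ha : a = 0
  · obtain ⟨t, ht⟩ : ∃ t : F, d * t ^ 2 + e * t + c ≠ 0 := by
      by_contra! H
      exact he (mul_left_cancel₀ h2 (by linear_combination H 1 - H (-1)))
    refine ⟨-(d * t ^ 2 + e * t + c) / b, t, div_ne_zero (neg_ne_zero.2 ht) hb, ?_⟩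
    subst ha
    field_simp
    ring
  obtain ⟨α, t, h⟩ := FiniteField.exists_root_sum_quadratic (f := C a * X ^ 2 + C b * X + C c)
    (g := C d * X ^ 2 + C e * X + C 0) (degree_quadratic ha) (degree_quadratic hd)
    (FiniteField.odd_card_of_char_ne_two hF)
  simp only [eval_add, eval_mul, eval_pow, eval_C, eval_X, add_zero] at h
  by_cases hα : α = 0
  · refine ⟨-b / a, t, div_ne_zero (neg_ne_zero.2 hb) ha, ?_⟩
    subst hα
    field_simp
    linear_combination a * h
  · exact ⟨α, t, hα, h⟩

end

namespace QuadraticForm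

section General

variable {V : Type*} [AddCommGroup V] [Module F V] {Q : QuadraticForm F V}

lemma map_smul_add (a : F) (x y : V) : Q (a • x + y) = a ^ 2 * Q x + a * polar Q x y + Q y := by
  rw [QuadraticMap.map_add Q, QuadraticMap.map_smul, polar_smul_left, smul_eq_mul, smul_eq_mul]
  ring

lemma map_mk_rep_eq_zero_iff {v : V} (hv : v ≠ 0) : Q (mk F v hv).rep = 0 ↔ Q v = 0 := by
  obtain ⟨a, ha⟩ := exists_smul_eq_mk_rep F v hv
  simp [← ha, Units.smul_def, QuadraticMap.map_smul]

lemma ne_zero_of_map_ne_zero {p : V} (hp : Q p ≠ 0) : p ≠ 0 :=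
  fun h ↦ hp (h ▸ QuadraticMap.map_zero Q)

lemma exists_ne_zero_polar_eq_zero [FiniteDimensional F V] (hV : 2 < finrank F V) (p q : V) :
    ∃ w ≠ 0, polar Q p w = 0 ∧ polar Q q w = 0 := by
  obtain ⟨w, hw, hw0⟩ := Submodule.exists_mem_ne_zero_of_ne_bot
    (((Q.polarBilin p).prod (Q.polarBilin q)).ker_ne_bot_of_finrank_lt (by simpa using hV))
  obtain ⟨hp, hq⟩ := Prod.ext_iff.1 hw
  exact ⟨w, hw0, hp, hq⟩

lemma inv_smul_polarBilin_apply_self {p : V} (hp : Q p ≠ 0) :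
    ((Q p)⁻¹ • Q.polarBilin p) p = 2 := by
  rw [LinearMap.smul_apply, polarBilin_apply_apply, polar_self, smul_eq_mul, two_nsmul]
  field_simp
  ring

noncomputable def reflection (Q : QuadraticForm F V) (p : V) (hp : Q p ≠ 0) : V ≃ₗ[F] V :=
  Module.reflection (inv_smul_polarBilin_apply_self hp)

section Reflection

variable {p : V} (hp : Q p ≠ 0)

lemma reflection_apply (v : V) :
    Q.reflection p hp v = v - ((Q p)⁻¹ * polar Q p v) • p := by
  simp [reflection, Module.reflection_apply]

@[simp]
lemma reflection_self : Q.reflection p hp p = -p :=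
  Module.reflection_apply_self _

lemma reflection_of_polar_eq_zero {w : V} (hw : polar Q p w = 0) : Q.reflection p hp w = w := by
  simp [reflection_apply, hw]

@[simp]
lemma reflection_mul_self : Q.reflection p hp * Q.reflection p hp = 1 :=
  LinearEquiv.ext (Module.involutive_reflection _)

@[simp]
lemma map_reflection (v : V) : Q (Q.reflection p hp v) = Q v := by
  rw [reflection_apply, sub_eq_add_neg, ← neg_smul, add_comm, map_smul_add, polar_comm]
  field_simp
  ring

lemma reflection_congr_smul {q : V} (hq : Q q ≠ 0) {a : F} (hqa : q = a • p) :
    Q.reflection q hq = Q.reflection p hp := by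
  subst hqa
  have ha : a ≠ 0 := by
    rintro rfl
    simp at hq
  ext v
  simp only [reflection_apply, QuadraticMap.map_smul, polar_smul_left, smul_eq_mul, smul_smul]
  congr 2
  field_simp

lemma toPerm_reflection_sq :
    (MulAction.toPerm (Q.reflection p hp) : Equiv.Perm (ℙ F V)) ^ 2 = 1 := by
  rw [← MulAction.toPermHom_apply, ← map_pow, _root_.sq, reflection_mul_self, map_one]

lemma toPerm_reflection_ne_one [FiniteDimensional F V] (hV : 1 < finrank F V)
    (h2 : (2 : F) ≠ 0) : (MulAction.toPerm (Q.reflection p hp) : Equiv.Perm (ℙ F V)) ≠ 1 := by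
  intro h
  obtain ⟨c, hc⟩ := (smul_eq_smul_iff (g' := 1)).1 fun x ↦ by
    simpa using (Equiv.ext_iff.1 h x).trans (one_smul (V ≃ₗ[F] V) x).symm
  obtain ⟨w, hw, hw0⟩ := Submodule.exists_mem_ne_zero_of_ne_bot
    ((Q.polarBilin p).ker_ne_bot_of_finrank_lt (by simpa using hV))
  have hc₁ : c = -1 := smul_left_injective F (ne_zero_of_map_ne_zero hp) <| by
    simpa using (hc p).symm
  have hc₂ : c = 1 := smul_left_injective F hw0 <| by
    simpa [reflection_of_polar_eq_zero hp hw] using (hc w).symm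
  exact h2 (by linear_combination hc₁ - hc₂)

end Reflection

lemma eq_of_toPerm_reflection_eq [FiniteDimensional F V] (hV : 2 < finrank F V)
    (h2 : (2 : F) ≠ 0) {x y : ℙ F V} (hx : Q x.rep ≠ 0) (hy : Q y.rep ≠ 0)
    (h : (MulAction.toPerm (Q.reflection x.rep hx) : Equiv.Perm (ℙ F V)) =
      MulAction.toPerm (Q.reflection y.rep hy)) :
    x = y := by
  obtain ⟨c, hc⟩ := smul_eq_smul_iff.1 fun z ↦ Equiv.ext_iff.1 h z
  obtain ⟨w, hw0, hxw, hyw⟩ := exists_ne_zero_polar_eq_zero (Q := Q) hV x.rep y.rep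
  have hc₁ : c = 1 := smul_left_injective F hw0 <| by
    simpa [reflection_of_polar_eq_zero _ hxw, reflection_of_polar_eq_zero _ hyw] using (hc w).symm
  have hxy : Q.reflection x.rep hx y.rep = -y.rep := by simpa [hc₁] using hc y.rep
  rw [reflection_apply] at hxy
  have hyx : ((2 : F)⁻¹ * ((Q x.rep)⁻¹ * polar Q x.rep y.rep)) • x.rep = y.rep := by
    apply smul_right_injective V h2
    simp only [smul_smul, mul_inv_cancel_left₀ h2]
    linear_combination (norm := module) -hxy
  rw [← mk_rep x, ← mk_rep y]
  exact ((mk_eq_mk_iff' F _ _ _ _).2 ⟨_, hyx⟩).symm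

theorem polar_eq_zero_of_isotropic_neg_smul_add [Fintype F] (hF : ringChar F ≠ 2)
    [FiniteDimensional F V] (hQ : Q.polarBilin.SeparatingLeft) {p : V} {E : Submodule F V}
    (hE : 2 ≤ finrank F E) (hspan : ∀ v, ∃ α : F, ∃ w ∈ E, v = α • p + w)
    (hiso : ∀ α : F, ∀ w ∈ E, Q (α • p + w) = 0 → Q (-α • p + w) = 0) :
    ∀ w ∈ E, polar Q p w = 0 := by
  have h2 : (2 : F) ≠ 0 := Ring.two_ne_zero hF
  have hsymm : ∀ α : F, α ≠ 0 → ∀ w ∈ E, Q (α • p + w) = 0 → polar Q p w = 0 := by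
    intro α hα w hw hQ₀
    have hQ₁ := hiso α w hw hQ₀
    rw [map_smul_add] at hQ₀ hQ₁
    have : (2 * α) * polar Q p w = 0 := by linear_combination hQ₀ - hQ₁
    exact (mul_eq_zero.1 this).resolve_left (mul_ne_zero h2 hα)
  by_contra! ⟨w₀, hw₀, hpw₀⟩
  obtain ⟨⟨u, huE⟩, hpu, hu0⟩ := Submodule.exists_mem_ne_zero_of_ne_bot
    (((Q.polarBilin p).domRestrict E).ker_ne_bot_of_finrank_lt (by rw [finrank_self]; exact hE))
  replace hpu : polar Q p u = 0 := hpu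
  obtain ⟨w, hwE, hwu⟩ : ∃ w ∈ E, polar Q w u ≠ 0 := by
    by_contra! H
    refine hu0 (Subtype.ext (hQ u fun v ↦ ?_))
    obtain ⟨α, w, hw, rfl⟩ := hspan v
    simp [polar_comm Q u, H w hw, hpu]
  obtain ⟨w₁, hw₁E, hpw₁, hw₁u⟩ : ∃ w₁ ∈ E, polar Q p w₁ ≠ 0 ∧ polar Q w₁ u ≠ 0 := by
    by_cases h₀ : polar Q w₀ u = 0
    · by_cases hpw : polar Q p w = 0
      · exact ⟨w₀ + w, add_mem hw₀ hwE, by simpa [polar_add_right, hpw],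
          by simpa [polar_add_left, h₀]⟩
      · exact ⟨w, hwE, hpw, hwu⟩
    · exact ⟨w₀, hw₀, hpw₀, h₀⟩
  -- `Q (α • p + (w₁ + t • u))` is a quadratic in `α` plus a quadratic in `t`, so it has a zero
  -- with `α ≠ 0`, while `polar Q p (w₁ + t • u) = polar Q p w₁ ≠ 0`.
  obtain ⟨α, t, hα, hroot⟩ := FiniteField.exists_ne_zero_quadratic_add_quadratic_eq_zero hF hpw₁
    hw₁u (a := Q p) (c := Q w₁) (d := Q u)
  refine hpw₁ ?_
  have := hsymm α hα (w₁ + t • u) (add_mem hw₁E (E.smul_mem t huE)) ?_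
  · simpa [polar_add_right, polar_smul_right, hpu] using this
  · rw [map_smul_add, add_comm w₁, map_smul_add, polar_add_right, polar_smul_right, hpu,
      polar_comm Q u]
    linear_combination hroot

theorem exists_eq_reflection_of_involutive [Fintype F] (hF : ringChar F ≠ 2)
    [FiniteDimensional F V] (hQ : Q.polarBilin.SeparatingLeft) {h : Module.End F V}
    (hh : ∀ v, h (h v) = v) (hiso : ∀ v, Q v = 0 → Q (h v) = 0)
    (hneg : finrank F (eigenspace h (-1)) = 1) (hpos : 2 ≤ finrank F (eigenspace h 1)) :
    ∃ p, ∃ hp : Q p ≠ 0, ∀ v, h v = Q.reflection p hp v := by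
  obtain ⟨⟨p, hpE⟩, hp0, hspan⟩ := finrank_eq_one_iff'.1 hneg
  have hhp : h p = -p := by simpa using mem_eigenspace_iff.1 hpE
  have hfix : ∀ w ∈ eigenspace h 1, h w = w := fun w hw ↦ by simpa using mem_eigenspace_iff.1 hw
  have hdecomp : ∀ v, ∃ α : F, ∃ w ∈ eigenspace h 1, v = α • p + w := by
    intro v
    have hv : v ∈ eigenspace h 1 ⊔ eigenspace h (-1) :=
      (isCompl_eigenspace_one_neg_one (Ring.two_ne_zero hF) hh).sup_eq_top ▸ Submodule.mem_top
    obtain ⟨w, hw, y, hy, rfl⟩ := Submodule.mem_sup.1 hv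
    obtain ⟨α, hα⟩ := hspan ⟨y, hy⟩
    have hαy : α • p = y := congrArg Subtype.val hα
    exact ⟨α, w, hw, by rw [add_comm, hαy]⟩
  have hperp := polar_eq_zero_of_isotropic_neg_smul_add hF hQ hpos hdecomp fun α w hw hQ₀ ↦ by
    simpa [hhp, hfix w hw] using hiso _ hQ₀
  have hp : Q p ≠ 0 := by
    refine fun hQp ↦ hp0 (Subtype.ext (hQ p fun v ↦ ?_))
    obtain ⟨α, w, hw, rfl⟩ := hdecomp v
    simp [polar_smul_right, polar_self, hQp, hperp w hw]
  refine ⟨p, hp, fun v ↦ ?_⟩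
  obtain ⟨α, w, hw, rfl⟩ := hdecomp v
  simp [hhp, hfix w hw, reflection_of_polar_eq_zero hp (hperp w hw)]

theorem exists_eq_smul_reflection_of_involutive [Fintype F] (hF : ringChar F ≠ 2)
    [FiniteDimensional F V] (hV : finrank F V = 3) (hQ : Q.polarBilin.SeparatingLeft)
    {h : Module.End F V} (hh : ∀ v, h (h v) = v) (hiso : ∀ v, Q v = 0 → Q (h v) = 0)
    (hne : h ≠ 1) (hne' : h ≠ -1) :
    ∃ p, ∃ hp : Q p ≠ 0, ∃ c : F, ∀ v, h v = c • Q.reflection p hp v := by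
  have hsum := Submodule.finrank_add_eq_of_isCompl
    (isCompl_eigenspace_one_neg_one (Ring.two_ne_zero hF) hh)
  have hlt : ∀ μ : F, h ≠ μ • 1 → finrank F (eigenspace h μ) < 3 := by
    refine fun μ hμ ↦ lt_of_le_of_ne (hV ▸ Submodule.finrank_le _) fun h3 ↦ hμ ?_
    refine LinearMap.ext fun v ↦ mem_eigenspace_iff.1 ?_
    exact Submodule.eq_top_of_finrank_eq (h3.trans hV.symm) ▸ Submodule.mem_top
  have hlt₁ := hlt 1 (by simpa using hne)
  have hlt₂ := hlt (-1) (by simpa using hne')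
  rcases (by omega : finrank F (eigenspace h (-1)) = 1 ∨ finrank F (eigenspace h 1) = 1)
    with h1 | h1
  · obtain ⟨p, hp, hr⟩ := exists_eq_reflection_of_involutive hF hQ hh hiso h1 (by omega)
    exact ⟨p, hp, 1, by simpa using hr⟩
  · obtain ⟨p, hp, hr⟩ := exists_eq_reflection_of_involutive (h := -h) hF hQ (by simpa using hh)
      (by simpa using hiso) (by rwa [eigenspace_neg, neg_neg]) (by rw [eigenspace_neg]; omega)
    exact ⟨p, hp, -1, fun v ↦ by simpa [neg_eq_iff_eq_neg] using hr v⟩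

end General

section Plane

variable {Q : QuadraticForm F (Fin 3 → F)}

lemma isCenterOf_toPerm_reflection {x : Pt F} (hx : Q x.rep ≠ 0) :
    IsCenterOf (MulAction.toPerm (Q.reflection x.rep hx)) x := by
  rintro L ⟨f, -, rfl⟩ hxL y
  induction y using Projectivization.ind with
  | h v hv =>
    simp only [Set.mem_ofPred_eq, MulAction.toPerm_apply, smul_mk, LinearEquiv.smul_def,
      LinearMap.map_mk_rep_eq_zero_iff] at hxL ⊢
    simp [reflection_apply, hxL]

lemma toPerm_reflection_mem_conicStab {p : Fin 3 → F} (hp : Q p ≠ 0) :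
    MulAction.toPerm (Q.reflection p hp) ∈ ConicStab {x : Pt F | Q x.rep = 0} := by
  refine ⟨⟨Q.reflection p hp, fun _ ↦ rfl⟩, fun x ↦ ?_⟩
  induction x using Projectivization.ind with
  | h v hv =>
    simp [smul_mk, map_mk_rep_eq_zero_iff]

theorem exists_toPerm_reflection_rep_eq [Fintype F] (hF : ringChar F ≠ 2)
    (hQ : Q.polarBilin.SeparatingLeft) {φ : Equiv.Perm (Pt F)}
    (hφ : φ ∈ ConicStab {x : Pt F | Q x.rep = 0}) (hsq : φ ^ 2 = 1) (hne : φ ≠ 1) :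
    ∃ x : Pt F, ∃ hx : Q x.rep ≠ 0, MulAction.toPerm (Q.reflection x.rep hx) = φ := by
  obtain ⟨⟨g, hg⟩, hO⟩ := hφ
  obtain rfl : φ = MulAction.toPerm g := Equiv.ext hg
  have hV : finrank F (Fin 3 → F) = 3 := Module.finrank_fin_fun F
  have hgO : ∀ v, Q (g v) = 0 ↔ Q v = 0 := by
    intro v
    rcases eq_or_ne v 0 with rfl | hv
    · simp
    · simpa [smul_mk, map_mk_rep_eq_zero_iff] using hO (mk F v hv)
  obtain ⟨a, ha⟩ := (smul_eq_smul_iff (g := g * g) (g' := 1)).1 fun x ↦ by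
    simpa [mul_smul, pow_two] using Equiv.ext_iff.1 hsq x
  obtain ⟨s, hs, hh⟩ := g.exists_smul_involutive (by rw [hV]; decide) (a := a) (by simpa using ha)
  have hiso : ∀ v, Q v = 0 → Q (s • g v) = 0 := fun v hv ↦ by
    rw [QuadraticMap.map_smul, (hgO v).2 hv, smul_zero]
  have toPerm_eq : ∀ (f : (Fin 3 → F) ≃ₗ[F] (Fin 3 → F)) (c : F), (∀ v, s • g v = c • f v) →
      (MulAction.toPerm f : Equiv.Perm (Pt F)) = MulAction.toPerm g := fun f c hc ↦
    Equiv.ext fun x ↦ (smul_eq_smul_iff.2 ⟨s⁻¹ * c, fun v ↦ by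
      rw [mul_smul, ← hc, smul_smul, inv_mul_cancel₀ hs, one_smul]⟩ x).symm
  have hne_smul : ∀ c : F, ¬ ∀ v, s • g v = c • v := fun c hc ↦ hne <| by
    simpa [MulAction.toPerm_one] using (toPerm_eq 1 c (by simpa using hc)).symm
  obtain ⟨p, hp, c, hc⟩ := exists_eq_smul_reflection_of_involutive
    (h := s • (g : Module.End F (Fin 3 → F))) hF hV hQ hh hiso
    (fun h1 ↦ hne_smul 1 fun v ↦ by simpa using LinearMap.congr_fun h1 v)
    (fun h1 ↦ hne_smul (-1) fun v ↦ by simpa using LinearMap.congr_fun h1 v)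
  have hp0 := ne_zero_of_map_ne_zero hp
  obtain ⟨b, hb⟩ := exists_smul_eq_mk_rep F p hp0
  have hx : Q (mk F p hp0).rep ≠ 0 := by simpa [map_mk_rep_eq_zero_iff] using hp
  exact ⟨mk F p hp0, hx, by rw [reflection_congr_smul hp hx hb.symm]; exact toPerm_eq _ c hc⟩

end Plane

end QuadraticForm

open QuadraticForm

/-- The map sending an involution of the stabilizer of a non-degenerate conic
to its center is a bijection between involutions and points off the conic. -/
theorem involution_center_bijection
    (F : Type) [Field F] [Fintype F] (hodd : Odd (Fintype.card F))
    (Q : QuadraticForm F (Fin 3 → F))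
    (hQ : ∀ v : Fin 3 → F, (∀ w, QuadraticMap.polar Q v w = 0) → v = 0)
    (O : Set (Pt F)) (hO : O = {x : Pt F | Q x.rep = 0}) :
    ∃ c : {φ : Equiv.Perm (Pt F) // φ ∈ ConicStab O ∧ φ ^ 2 = 1 ∧ φ ≠ 1} → {X : Pt F // X ∉ O},
      (∀ φ, IsCenterOf φ.1 (c φ).1) ∧ Function.Bijective c := by
  subst hO
  have hF : ringChar F ≠ 2 := fun h ↦
    Nat.not_even_iff_odd.2 hodd (Nat.even_iff.2 (FiniteField.even_card_iff_char_two.1 h))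
  have hV : finrank F (Fin 3 → F) = 3 := Module.finrank_fin_fun F
  let σ (X : {X : Pt F // X ∉ {x : Pt F | Q x.rep = 0}}) :
      {φ : Equiv.Perm (Pt F) // φ ∈ ConicStab {x : Pt F | Q x.rep = 0} ∧ φ ^ 2 = 1 ∧ φ ≠ 1} :=
    ⟨MulAction.toPerm (Q.reflection X.1.rep X.2), toPerm_reflection_mem_conicStab X.2,
      toPerm_reflection_sq X.2, toPerm_reflection_ne_one X.2 (by omega) (Ring.two_ne_zero hF)⟩
  have hσ : Function.Bijective σ := by
    refine ⟨fun X Y h ↦ Subtype.ext (eq_of_toPerm_reflection_eq (by omega) (Ring.two_ne_zero hF)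
      X.2 Y.2 (congrArg Subtype.val h)), fun φ ↦ ?_⟩
    obtain ⟨x, hx, hφ⟩ := exists_toPerm_reflection_rep_eq hF hQ φ.2.1 φ.2.2.1 φ.2.2.2
    exact ⟨⟨x, hx⟩, Subtype.ext hφ⟩
  refine ⟨(Equiv.ofBijective σ hσ).symm, fun φ ↦ ?_, (Equiv.ofBijective σ hσ).symm.bijective⟩
  conv_lhs => rw [← (Equiv.ofBijective σ hσ).apply_symm_apply φ]
  exact isCenterOf_toPerm_reflection _
end

section
/- Let q be an odd prime power and let S be a set of involutions of AGL(1,q). Writing each involution of S as x ↦ −x + b, the pair (⟨S⟩, S) satisfies the intersection property (i.e., is a C-group) if and only if the set of associated points {b/2 : involutions x ↦ −x + b in S} (equivalently, the fixed points) is affinely independent over F_p in F_q viewed as an F_p-vector space. -/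
/-!
By `hform` every generator is the point reflection in its fixed point `c i`. The product of two
point reflections is the translation by twice the difference of their centres, and the powers
of a translation by `v` are the translations by the `𝔽_p`-multiples of `v`; since `2` is
invertible, the group generated by the reflections in the points of a set `s` therefore consists
of the translations by the direction of the `𝔽_p`-affine span of `s` and the reflections in the
points of that span. The intersection property thus says that the affine spans of subfamilies of
`c`, and their directions, meet as the index sets do. This holds for an affinely independent
family, and it fails for `J = {x | x ≠ i}`, `K = {i}` as soon as `c i` lies in the span of the
other points.
-/

attribute [local instance] ZMod.algebra

open AffineEquiv

theorem affineIndependent_of_forall_notMem_affineSpan {k V P ι : Type*} [DivisionRing k]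
    [AddCommGroup V] [Module k V] [AddTorsor V P] {p : ι → P}
    (h : ∀ i, p i ∉ affineSpan k (p '' {x | x ≠ i})) : AffineIndependent k p := by
  classical
  intro s w hw hs i hi
  by_contra hwi
  -- rescale the relation so that `p i` enters with weight `-1`
  let w' : ι → k := -(w i)⁻¹ • w
  have hw'i : w' i = -1 := by simp [w', hwi]
  have hw's : s.weightedVSub p w' = (0 : V) := by simp [w', hs]
  apply h i
  rw [← s.affineCombination_eq_of_weightedVSub_eq_zero_of_eq_neg_one hw's hi hw'i]
  refine affineCombination_mem_affineSpan_image ?_ (fun j hj hji => ?_) p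
  · rw [Finset.filter_ne', Finset.sum_erase_eq_sub hi, hw'i]
    simp [w', ← Finset.mul_sum, hw]
  · exact absurd (Finset.mem_filter.1 hj).2 hji

theorem AffineIndependent.vectorSpan_image_inf_le {k V P ι : Type*} [Ring k] [Nontrivial k]
    [AddCommGroup V] [Module k V] [AddTorsor V P] {p : ι → P} (ha : AffineIndependent k p)
    (J K : Set ι) :
    vectorSpan k (p '' J) ⊓ vectorSpan k (p '' K) ≤ vectorSpan k (p '' (J ∩ K)) := by
  rintro v ⟨hvJ, hvK⟩
  rw [← direction_affineSpan] at hvJ hvK ⊢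
  have key : ∀ i ∈ K, v ∈ (affineSpan k (p '' insert i (J ∩ K))).direction := by
    intro i hiK
    have hpi : ∀ {L : Set ι}, i ∈ L → p i ∈ affineSpan k (p '' L) :=
      fun hiL => mem_affineSpan k (Set.mem_image_of_mem p hiL)
    have hJ : v +ᵥ p i ∈ affineSpan k (p '' insert i J) := by
      refine AffineSubspace.vadd_mem_of_mem_direction ?_ (hpi (Set.mem_insert i J))
      exact AffineSubspace.direction_le
        (affineSpan_mono k (Set.image_mono (Set.subset_insert i J))) hvJ
    have hK : v +ᵥ p i ∈ affineSpan k (p '' K) :=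
      AffineSubspace.vadd_mem_of_mem_direction hvK (hpi hiK)
    have hJK : v +ᵥ p i ∈ affineSpan k (p '' insert i (J ∩ K)) := by
      rw [← Set.insert_inter_of_mem hiK, ← ha.inf_affineSpan_eq_affineSpan_inter]
      exact ⟨hJ, hK⟩
    simpa using AffineSubspace.vsub_mem_direction hJK (hpi (Set.mem_insert i _))
  rcases (J ∩ K).eq_empty_or_nonempty with hJK | ⟨i, hi⟩
  · rcases K.eq_empty_or_nonempty with rfl | ⟨i, hiK⟩
    · simpa using hvK
    · simpa [hJK, direction_affineSpan] using key i hiK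
  · simpa [Set.insert_eq_of_mem hi] using key i hi.2

section Dihedral

variable {R V : Type*} [Ring R] [AddCommGroup V] [Module R V]

theorem pointReflection_mul_pointReflection (d e : V) :
    pointReflection R d * pointReflection R e = constVAdd R V ((d - e) + (d - e)) := by
  ext x; simp [Equiv.pointReflection_apply]; abel

theorem constVAdd_add_self_mul_pointReflection (u d : V) :
    constVAdd R V (u + u) * pointReflection R d = pointReflection R (u + d) := by
  ext x; simp [Equiv.pointReflection_apply]; abel

theorem pointReflection_mul_constVAdd_add_self (d u : V) :
    pointReflection R d * constVAdd R V (u + u) = pointReflection R (-u + d) := by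
  ext x; simp [Equiv.pointReflection_apply]; abel

theorem constVAdd_ne_pointReflection (k : Type*) [Ring k] [Invertible (2 : k)] [Module k V]
    [Nontrivial V] (v d : V) : constVAdd R V v ≠ pointReflection R d := by
  intro h
  have hv : v = 0 := by simpa using congr($h d)
  subst hv
  obtain ⟨x, hx⟩ := exists_ne d
  refine hx ((pointReflection_fixed_iff_of_module k).1 ?_)
  simpa [coe_pointReflection] using congr($h x).symm

theorem pointReflection_injective (k : Type*) [Ring k] [Invertible (2 : k)] [Module k V] :
    Function.Injective (pointReflection R : V → V ≃ᵃ[R] V) := fun d e h =>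
  injective_pointReflection_left_of_module k (0 : V) <| by
    simpa only [coe_pointReflection] using congr($h 0)

variable {k : Type*} [Ring k] [Module k V]

theorem exists_add_self_eq [Invertible (2 : k)] {S : Submodule k V} {v : V} (hv : v ∈ S) :
    ∃ u ∈ S, u + u = v :=
  ⟨⅟2 • v, S.smul_mem _ hv, invOf_two_smul_add_invOf_two_smul k v⟩

variable (R) in
def dihedralSubgroup [Invertible (2 : k)] (A : AffineSubspace k V) : Subgroup (V ≃ᵃ[R] V) where
  carrier :=
    {g | (∃ v ∈ A.direction, constVAdd R V v = g) ∨ ∃ d ∈ A, pointReflection R d = g}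
  one_mem' := Or.inl ⟨0, A.direction.zero_mem, constVAdd_zero R V⟩
  mul_mem' := by
    rintro _ _ (⟨v, hv, rfl⟩ | ⟨d, hd, rfl⟩) (⟨w, hw, rfl⟩ | ⟨e, he, rfl⟩)
    · exact Or.inl ⟨v + w, A.direction.add_mem hv hw, constVAdd_add R V v w⟩
    · obtain ⟨u, hu, rfl⟩ := exists_add_self_eq hv
      exact Or.inr ⟨u + e, AffineSubspace.vadd_mem_of_mem_direction hu he,
        (constVAdd_add_self_mul_pointReflection u e).symm⟩
    · obtain ⟨u, hu, rfl⟩ := exists_add_self_eq hw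
      exact Or.inr ⟨-u + d, AffineSubspace.vadd_mem_of_mem_direction (A.direction.neg_mem hu) hd,
        (pointReflection_mul_constVAdd_add_self d u).symm⟩
    · have hde : d - e ∈ A.direction := AffineSubspace.vsub_mem_direction hd he
      exact Or.inl ⟨_, A.direction.add_mem hde hde,
        (pointReflection_mul_pointReflection d e).symm⟩
  inv_mem' := by
    rintro _ (⟨v, hv, rfl⟩ | ⟨d, hd, rfl⟩)
    · exact Or.inl ⟨-v, A.direction.neg_mem hv, (constVAdd_symm R V v).symm⟩
    · exact Or.inr ⟨d, hd, (pointReflection_symm R d).symm⟩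

theorem dihedralSubgroup_mono [Invertible (2 : k)] {A B : AffineSubspace k V} (hAB : A ≤ B) :
    dihedralSubgroup R A ≤ dihedralSubgroup R B := by
  rintro _ (⟨v, hv, rfl⟩ | ⟨d, hd, rfl⟩)
  · exact Or.inl ⟨v, AffineSubspace.direction_le hAB hv, rfl⟩
  · exact Or.inr ⟨d, hAB hd, rfl⟩

theorem closure_pointReflection_image (n : ℕ) [Module (ZMod n) V] [Invertible (2 : ZMod n)]
    (s : Set V) :
    Subgroup.closure (pointReflection R '' s) = dihedralSubgroup R (affineSpan (ZMod n) s) := by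
  set G := Subgroup.closure (pointReflection R '' s)
  let T : Submodule (ZMod n) V :=
    AddSubgroup.toZModSubmodule n (Subgroup.toAddSubgroup' (G.comap (constVAddHom R V)))
  have hT : ∀ v, v ∈ T ↔ constVAdd R V v ∈ G := fun v => Iff.rfl
  have hpr : ∀ {d}, d ∈ s → pointReflection R d ∈ G :=
    fun hd => Subgroup.subset_closure (Set.mem_image_of_mem _ hd)
  have hspan : vectorSpan (ZMod n) s ≤ T := by
    refine Submodule.span_le.2 ?_
    rintro _ ⟨d, hd, e, he, rfl⟩
    have h2 : (d - e) + (d - e) ∈ T := by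
      rw [hT, ← pointReflection_mul_pointReflection]
      exact G.mul_mem (hpr hd) (hpr he)
    simpa [smul_add, invOf_two_smul_add_invOf_two_smul] using T.smul_mem (⅟2 : ZMod n) h2
  apply le_antisymm
  · refine (Subgroup.closure_le _).2 ?_
    rintro _ ⟨d, hd, rfl⟩
    exact Or.inr ⟨d, mem_affineSpan _ hd, rfl⟩
  · rintro _ (⟨v, hv, rfl⟩ | ⟨d, hd, rfl⟩)
    · exact (hT v).1 (hspan (direction_affineSpan (ZMod n) s ▸ hv))
    · obtain ⟨e, he⟩ := (affineSpan_nonempty (ZMod n)).1 ⟨d, hd⟩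
      have hde : d - e ∈ vectorSpan (ZMod n) s := by
        rw [← direction_affineSpan]
        exact AffineSubspace.vsub_mem_direction hd (mem_affineSpan _ he)
      rw [← sub_add_cancel d e, ← constVAdd_add_self_mul_pointReflection]
      exact G.mul_mem ((hT _).1 (T.add_mem (hspan hde) (hspan hde))) (hpr he)

end Dihedral

section Independence

variable {R k V ι : Type*} [Ring R] [DivisionRing k] [Invertible (2 : k)] [AddCommGroup V]
  [Module R V] [Module k V] [Nontrivial V] {c : ι → V}

theorem AffineIndependent.dihedralSubgroup_inf (ha : AffineIndependent k c) (J K : Set ι) :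
    dihedralSubgroup R (affineSpan k (c '' J)) ⊓ dihedralSubgroup R (affineSpan k (c '' K)) =
      dihedralSubgroup R (affineSpan k (c '' (J ∩ K))) := by
  refine le_antisymm ?_ (le_inf (dihedralSubgroup_mono (affineSpan_mono k
    (Set.image_mono Set.inter_subset_left))) (dihedralSubgroup_mono (affineSpan_mono k
    (Set.image_mono Set.inter_subset_right))))
  rintro _ ⟨⟨v, hvJ, rfl⟩ | ⟨d, hdJ, rfl⟩, ⟨w, hwK, hwv⟩ | ⟨e, heK, hed⟩⟩
  · obtain rfl : w = v := by simpa using congr($hwv 0)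
    rw [direction_affineSpan] at hvJ hwK
    refine Or.inl ⟨w, ?_, rfl⟩
    rw [direction_affineSpan]
    exact ha.vectorSpan_image_inf_le J K ⟨hvJ, hwK⟩
  · exact absurd hed.symm (constVAdd_ne_pointReflection k v e)
  · exact absurd hwv (constVAdd_ne_pointReflection k w d)
  · obtain rfl := pointReflection_injective k hed
    exact Or.inr ⟨e, ha.inf_affineSpan_eq_affineSpan_inter J K ▸ ⟨hdJ, heK⟩, rfl⟩

theorem forall_dihedralSubgroup_inf_iff_affineIndependent :
    (∀ J K : Set ι, dihedralSubgroup R (affineSpan k (c '' J)) ⊓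
        dihedralSubgroup R (affineSpan k (c '' K)) =
          dihedralSubgroup R (affineSpan k (c '' (J ∩ K)))) ↔
      AffineIndependent k c := by
  refine ⟨fun h => affineIndependent_of_forall_notMem_affineSpan fun i hi => ?_,
    fun ha => ha.dihedralSubgroup_inf⟩
  have hmem : pointReflection R (c i) ∈ dihedralSubgroup R (affineSpan k (c '' {x | x ≠ i})) ⊓
      dihedralSubgroup R (affineSpan k (c '' {i})) :=
    ⟨Or.inr ⟨c i, hi, rfl⟩,
      Or.inr ⟨c i, mem_affineSpan k (Set.mem_image_of_mem c rfl), rfl⟩⟩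
  rw [h, show {x | x ≠ i} ∩ {i} = ∅ by simp, Set.image_empty, AffineSubspace.span_empty]
    at hmem
  rcases hmem with ⟨v, hv, hvi⟩ | ⟨d, hd, -⟩
  · obtain rfl : v = 0 := by simpa using hv
    exact constVAdd_ne_pointReflection k 0 (c i) hvi
  · exact AffineSubspace.notMem_bot k V d hd

end Independence

theorem agl1_c_group_iff_affinely_independent_general
    (p : ℕ) [Fact p.Prime] (hp : p ≠ 2)
    (F : Type) [Field F] [CharP F p]
    (ι : Type) (α : ι → (F ≃ᵃ[F] F))
    (c : ι → F)
    (hform : ∀ i x, α i x = -x + (c i + c i)) :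
    (∀ J K : Set ι,
        Subgroup.closure (α '' J) ⊓ Subgroup.closure (α '' K) =
          Subgroup.closure (α '' (J ∩ K))) ↔
      AffineIndependent (ZMod p) c := by
  have : Invertible (2 : ZMod p) :=
    invertibleOfNonzero (Ring.two_ne_zero (by rwa [ZMod.ringChar_zmod_n]))
  obtain rfl : α = pointReflection F ∘ c :=
    funext fun i => AffineEquiv.ext fun x => by
      rw [hform, Function.comp_apply, pointReflection_apply, vsub_eq_sub, vadd_eq_add]; abel
  simp only [Set.image_comp, closure_pointReflection_image p]
  exact forall_dihedralSubgroup_inf_iff_affineIndependent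

/-- A set of involutions of `AGL(1,q)` satisfies the intersection property
(is a C-group together with the subgroup it generates) if and only if the set of their fixed
points is affinely independent over the prime field `F_p`. -/
theorem agl1_c_group_iff_affinely_independent
    (p : ℕ) [Fact p.Prime] (hp : p ≠ 2)
    (F : Type) [Field F] [Fintype F] [CharP F p]
    (ι : Type) (α : ι → (F ≃ᵃ[F] F)) (hinj : Function.Injective α)
    (hinv : ∀ i, (α i) ^ 2 = 1 ∧ α i ≠ 1)
    (c : ι → F) (hc : ∀ i, α i (c i) = c i)
    (hform : ∀ i x, α i x = -x + (c i + c i)) :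
    (∀ J K : Set ι,
        Subgroup.closure (α '' J) ⊓ Subgroup.closure (α '' K) =
          Subgroup.closure (α '' (J ∩ K))) ↔
      AffineIndependent (ZMod p) c :=
  agl1_c_group_iff_affinely_independent_general p hp F ι α c hform
end

section
/- Let q be an odd prime power, O a non-degenerate conic in PG(2,q), and G its stabilizer. If three involutions of G pairwise commute and are pairwise distinct, then their centers are not collinear, and the axis of each is the line joining the centers of the other two (i.e., their centers form a self-polar triangle with respect to O). -/
open Projectivization

variable {F : Type} [Field F]

/-!
Lift each involution `α` with center `X` to a linear involution `T` of `F³`: `α` fixes `X`, so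
a lift can be rescaled to fix `X.rep`, and then its square is a scalar fixing `X.rep`. Since every
line through `X` is invariant, `T v` lies in the span of `X.rep` and `v`; with `α ≠ 1` and `2 ≠ 0`
this makes the fixed space of `T` exactly the line `X`. Lifts of commuting involutions commute:
`T S T = a S` with `a² = 1`, and determinants give `a³ = 1`. So `T_Q` preserves the fixed line of
`T_P`, i.e. `T_Q P = ±P`, and the sign `+` would force `T_P = T_Q`. Hence each `T_X` is `-1` on the
other two centers; the three centers are then independent, and the line through two of them is
fixed pointwise by the third involution.
-/

open Module Submodule
open scoped LinearAlgebra.Projectivization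

section General

variable {K V : Type*} [Field K] [AddCommGroup V] [Module K V]

namespace Projectivization

theorem apply_rep_mk_eq_zero_iff (f : Dual K V) {v : V} (hv : v ≠ 0) :
    f (mk K v hv).rep = 0 ↔ f v = 0 := by
  obtain ⟨a, ha⟩ := exists_smul_eq_mk_rep K v hv
  rw [← ha, Units.smul_def, map_smul, smul_eq_zero, or_iff_right a.ne_zero]

theorem exists_eq_smul_one_of_map_eq_self {f : End K V} (hf : Function.Injective f)
    (h : ∀ x, map f hf x = x) : ∃ a : K, f = a • 1 :=
  LinearMap.exists_eq_smul_id_of_forall_notLinearIndependent fun v => by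
    by_cases hv : v = 0
    · simp [hv, linearIndependent_fin2]
    · have hv' := h (mk K v hv)
      rw [map_mk, mk_eq_mk_iff'] at hv'
      simpa [LinearIndependent.pair_iff' hv] using hv'

theorem map_mul_apply {f g : End K V} (hf : Function.Injective f) (hg : Function.Injective g)
    (x : ℙ K V) : map (f * g) (hf.comp hg) x = map f hf (map g hg x) :=
  congrFun (map_comp g hg f hf) x

theorem map_smul_eq {f : End K V} (hf : Function.Injective f) {a : K}
    (haf : Function.Injective (a • f)) : map (a • f) haf = map f hf := by
  ext x
  induction x using ind with
  | h v hv => exact (mk_eq_mk_iff' K _ _ _ _).2 ⟨a, rfl⟩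

end Projectivization

theorem eq_zero_of_eq_neg (h2 : (2 : K) ≠ 0) {v : V} (h : v = -v) : v = 0 := by
  refine (smul_eq_zero.1 ?_).resolve_left h2
  rw [two_smul]
  nth_rewrite 1 [h]
  exact neg_add_cancel v

namespace Module.End

variable {T S : End K V}

theorem apply_apply_of_mul_self_eq_one (hT : T * T = 1) (v : V) : T (T v) = v :=
  LinearMap.congr_fun hT v

theorem eq_of_commute_of_apply_eq_self_iff (h2 : (2 : K) ≠ 0) (hT : T * T = 1) (hS : S * S = 1)
    (hTS : Commute T S) (hfix : ∀ v, T v = v ↔ S v = v) : T = S := by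
  -- `S` preserves the `-1`-eigenspace of `T` and has no fixed vector in it.
  have hS_neg : ∀ x, T x = -x → S x = -x := by
    intro x hx
    have hy := (hfix (x + S x)).2 (by rw [map_add, apply_apply_of_mul_self_eq_one hS, add_comm])
    rw [map_add, hx, ← mul_apply, hTS.eq, mul_apply, hx, map_neg, ← neg_add] at hy
    exact eq_neg_of_add_eq_zero_right (eq_zero_of_eq_neg h2 hy.symm)
  ext v
  have hplus := (hfix (v + T v)).1 (by rw [map_add, apply_apply_of_mul_self_eq_one hT, add_comm])
  have hminus := hS_neg (v - T v) (by rw [map_sub, apply_apply_of_mul_self_eq_one hT, neg_sub])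
  rw [map_add] at hplus
  rw [map_sub] at hminus
  apply smul_right_injective V h2
  linear_combination (norm := module) -hplus - hminus

theorem apply_eq_neg_of_commute (h2 : (2 : K) ≠ 0) (hT : T * T = 1) (hS : S * S = 1)
    (hTS : Commute T S) (hne : T ≠ S) {p q : V} (hp : p ≠ 0)
    (hTp : ∀ v, T v = v ↔ v ∈ K ∙ p) (hSq : ∀ v, S v = v ↔ v ∈ K ∙ q) :
    S p = -p := by
  have hTp_self : T p = p := (hTp p).2 (mem_span_singleton_self p)
  obtain ⟨t, ht⟩ := mem_span_singleton.1 <| (hTp (S p)).1 <| by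
    rw [← mul_apply, hTS.eq, mul_apply, hTp_self]
  have htt : t * t = 1 := by
    have h := apply_apply_of_mul_self_eq_one hS p
    rw [← ht, map_smul, ← ht, smul_smul] at h
    exact smul_left_injective K hp (h.trans (one_smul K p).symm)
  rcases mul_self_eq_one_iff.1 htt with rfl | rfl
  · refine absurd (eq_of_commute_of_apply_eq_self_iff h2 hT hS hTS fun v => ?_) hne
    obtain ⟨c, rfl⟩ := mem_span_singleton.1 <| (hSq p).1 (by rw [← ht, one_smul])
    have hc : c ≠ 0 := by rintro rfl; simp at hp
    rw [hTp, hSq, span_singleton_smul_eq (IsUnit.mk0 c hc)]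
  · rw [← ht, neg_one_smul]

theorem mem_span_singleton_of_apply_eq_self (h2 : (2 : K) ≠ 0) (hT : T * T = 1) (hne : T ≠ 1)
    {c : V} (hc : T c = c) (hspan : ∀ v, T v ∈ span K {c, v}) {u : V} (hu : T u = u) :
    u ∈ K ∙ c := by
  obtain ⟨v, hv⟩ : ∃ v, T v ≠ v := by
    by_contra! h
    exact hne (LinearMap.ext h)
  set w := v - T v
  have hw : T w = -w := by rw [map_sub, apply_apply_of_mul_self_eq_one hT, neg_sub]
  have hw0 : w ≠ 0 := sub_ne_zero.2 (Ne.symm hv)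
  -- `T (u + w) = u - w ∈ span {c, u + w}`; applying `T` again forces the coefficient of `u + w`
  -- to be `-1`, which leaves `2 • u ∈ K ∙ c`.
  obtain ⟨a, b, hab⟩ := mem_span_pair.1 (hspan (u + w))
  rw [map_add, hu, hw] at hab
  have hab' := congrArg T hab
  rw [map_add, map_smul, map_smul, hc, map_add, hu, hw, map_add, hu, map_neg, hw, neg_neg] at hab'
  have hb : b = -1 := by
    have : ((2 : K) * (b + 1)) • w = 0 := by linear_combination (norm := module) hab - hab'
    simpa [h2, hw0, add_eq_zero_iff_eq_neg] using this
  subst hb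
  refine mem_span_singleton.2 ⟨2⁻¹ * a, smul_right_injective V h2 ?_⟩
  dsimp only
  rw [smul_smul, mul_inv_cancel_left₀ h2]
  linear_combination (norm := module) hab

end Module.End

structure IsInvolutiveLift (φ : Equiv.Perm (ℙ K V)) (T : End K V) : Prop where
  mul_self : T * T = 1
  injective : Function.Injective T
  map_eq : ∀ x, φ x = map T injective x

namespace IsInvolutiveLift

variable {φ ψ : Equiv.Perm (ℙ K V)} {T S : End K V}

theorem perm_mul_self (hT : IsInvolutiveLift φ T) : φ * φ = 1 := by
  ext x
  induction x using ind with
  | h v hv => simp [hT.map_eq, map_mk, End.apply_apply_of_mul_self_eq_one hT.mul_self]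

theorem eq_of_lift_eq (hT : IsInvolutiveLift φ T) (hS : IsInvolutiveLift ψ S) (h : T = S) :
    φ = ψ := by
  subst h
  exact Equiv.ext fun x => by rw [hT.map_eq, hS.map_eq]

theorem commute [FiniteDimensional K V] (hodd : Odd (finrank K V)) (hT : IsInvolutiveLift φ T)
    (hS : IsInvolutiveLift ψ S) (h : Commute φ ψ) : Commute T S := by
  have : Nontrivial V := Module.nontrivial_of_finrank_pos hodd.pos
  have hφψ : φ * ψ * φ * ψ = 1 := by
    rw [mul_assoc φ ψ φ, ← h.eq, ← mul_assoc, hT.perm_mul_self, one_mul, hS.perm_mul_self]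
  obtain ⟨a, ha⟩ := exists_eq_smul_one_of_map_eq_self (f := T * S * T * S)
    (((hT.injective.comp hS.injective).comp hT.injective).comp hS.injective) fun x => by
      induction x using ind with
      | h v hv =>
        have hv' : (φ * ψ * φ * ψ) (Projectivization.mk K v hv) =
            Projectivization.mk K v hv := by
          rw [hφψ]; rfl
        simpa only [Equiv.Perm.mul_apply, End.mul_apply, hT.map_eq, hS.map_eq, map_mk] using hv'
  have hTST : T * S * T = a • S := by
    rw [← smul_one_mul, ← ha, mul_assoc _ S S, hS.mul_self, mul_one]
  have ha2 : a ^ 2 = 1 := by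
    have h1 : (T * S * T) * (T * S * T) = 1 := by
      simp only [mul_assoc, ← mul_assoc T T, hT.mul_self, ← mul_assoc S S, hS.mul_self, one_mul]
    rw [hTST, smul_mul_smul_comm, hS.mul_self, ← sq] at h1
    exact smul_left_injective K one_ne_zero (h1.trans (one_smul K 1).symm)
  have han : a ^ finrank K V = 1 := by
    have hdetT : LinearMap.det T * LinearMap.det T = 1 := by
      rw [← map_mul, hT.mul_self, map_one]
    have hdetS : LinearMap.det S ≠ 0 := fun h0 => by
      simpa [h0] using congrArg LinearMap.det hS.mul_self
    have hdet := congrArg LinearMap.det hTST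
    rw [map_mul, map_mul, mul_right_comm, hdetT, one_mul, LinearMap.det_smul] at hdet
    exact (mul_eq_right₀ hdetS).1 hdet.symm
  obtain ⟨k, hk⟩ := hodd
  rw [hk, pow_succ, pow_mul, ha2, one_pow, one_mul] at han
  calc T * S = T * S * T * T := by rw [mul_assoc (T * S) T T, hT.mul_self, mul_one]
    _ = S * T := by rw [hTST, han, one_smul]

theorem apply_eq_neg_of_commute [FiniteDimensional K V] (h2 : (2 : K) ≠ 0)
    (hodd : Odd (finrank K V)) (hT : IsInvolutiveLift φ T) (hS : IsInvolutiveLift ψ S)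
    (hne : φ ≠ ψ) (h : Commute φ ψ) {p q : V} (hp : p ≠ 0) (hq : q ≠ 0)
    (hTp : ∀ v, T v = v ↔ v ∈ K ∙ p) (hSq : ∀ v, S v = v ↔ v ∈ K ∙ q) :
    S p = -p ∧ T q = -q := by
  have hTS := hT.commute hodd hS h
  have hne' : T ≠ S := fun hTS => hne (hT.eq_of_lift_eq hS hTS)
  exact ⟨End.apply_eq_neg_of_commute h2 hT.mul_self hS.mul_self hTS hne' hp hTp hSq,
    End.apply_eq_neg_of_commute h2 hS.mul_self hT.mul_self hTS.symm hne'.symm hq hSq hTp⟩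

end IsInvolutiveLift

theorem span_triple_eq_top_of_apply_eq_neg [FiniteDimensional K V] (h2 : (2 : K) ≠ 0)
    (hV : finrank K V = 3) {T S : End K V} {p q r : V} (hp : p ≠ 0) (hq : q ≠ 0)
    (hr : r ≠ 0) (hTp : T p = p) (hTq : T q = -q) (hTr : T r = -r) (hSq : S q = q)
    (hSr : S r = -r) : span K {p, q, r} = ⊤ := by
  have hli : LinearIndependent K ![p, q, r] := by
    rw [Fintype.linearIndependent_iff]
    intro c hc
    simp only [Fin.sum_univ_three, Matrix.cons_val_zero, Matrix.cons_val_one,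
      Matrix.cons_val_two, Matrix.head_cons, Matrix.tail_cons] at hc
    have hcT := congrArg T hc
    simp only [map_add, map_smul, hTp, hTq, hTr, map_zero] at hcT
    have hc0 : c 0 = 0 := by
      have : ((2 : K) * c 0) • p = 0 := by linear_combination (norm := module) hc + hcT
      simpa [h2, hp] using this
    rw [hc0, zero_smul, zero_add] at hc
    have hcS := congrArg S hc
    simp only [map_add, map_smul, hSq, hSr, map_zero] at hcS
    have hc1 : c 1 = 0 := by
      have : ((2 : K) * c 1) • q = 0 := by linear_combination (norm := module) hc + hcS
      simpa [h2, hq] using this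
    have hc2 : c 2 = 0 := by simpa [hc1, hr] using hc
    intro i
    fin_cases i <;> assumption
  have := hli.span_eq_top_of_card_eq_finrank' (by rw [hV, Fintype.card_fin])
  rwa [Matrix.range_cons, Matrix.range_cons, Matrix.range_cons, Matrix.range_empty,
    Set.union_empty, Set.singleton_union, Set.singleton_union] at this

theorem Module.Dual.eq_zero_of_span_triple_eq_top {p q r : V} (hspan : span K {p, q, r} = ⊤)
    {f : Dual K V} (hp : f p = 0) (hq : f q = 0) (hr : f r = 0) : f = 0 :=
  LinearMap.ext_on hspan (by rintro _ (rfl | rfl | rfl) <;> simpa)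

end General

namespace IsCenterOf

variable {φ : Equiv.Perm (Pt F)} {C : Pt F}

theorem apply_mem_span_pair (hC : IsCenterOf φ C) {T : End F (Fin 3 → F)}
    (hT : Function.Injective T) (hφ : ∀ x, φ x = map T hT x) (v : Fin 3 → F) :
    T v ∈ span F {C.rep, v} := by
  -- Otherwise some line through `C` and `[v]` misses `[T v] = φ [v]`.
  by_contra hnot
  have hv : v ≠ 0 := by
    rintro rfl
    exact hnot (by simp)
  obtain ⟨f, hfT, hf⟩ := exists_dual_map_eq_bot_of_notMem hnot inferInstance
  have hf0 : ∀ x ∈ span F {C.rep, v}, f x = 0 := fun x hx => by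
    simpa [hf] using mem_map_of_mem (f := f) hx
  have hL : IsLine {x : Pt F | f x.rep = 0} := ⟨f, fun h => hfT (by simp [h]), rfl⟩
  have hvL := (hC _ hL (hf0 _ (subset_span (by simp))) (mk F v hv)).2
    ((apply_rep_mk_eq_zero_iff f hv).2 (hf0 _ (subset_span (by simp))))
  rw [hφ, map_mk] at hvL
  exact hfT ((apply_rep_mk_eq_zero_iff f _).1 hvL)

theorem exists_isInvolutiveLift (hC : IsCenterOf φ C) (hφ : IsProjy φ) (hsq : φ ^ 2 = 1) :
    ∃ T, IsInvolutiveLift φ T ∧ T C.rep = C.rep := by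
  obtain ⟨g, hg⟩ := hφ
  obtain ⟨l, hl⟩ := mem_span_singleton.1 <| by
    simpa using hC.apply_mem_span_pair g.injective hg C.rep
  have hl0 : l ≠ 0 := by
    rintro rfl
    exact C.rep_nonzero (g.injective (by rw [← hl, zero_smul, map_zero]))
  set T : End F (Fin 3 → F) := l⁻¹ • (g : End F (Fin 3 → F))
  have hTinj : Function.Injective T :=
    (smul_right_injective _ (inv_ne_zero hl0)).comp g.injective
  have hTφ : ∀ x, φ x = map T hTinj x := fun x => by rw [hg, map_smul_eq g.injective]
  have hTc : T C.rep = C.rep := by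
    simp [T, ← hl, smul_smul, inv_mul_cancel₀ hl0]
  obtain ⟨s, hs⟩ := exists_eq_smul_one_of_map_eq_self (f := T * T) (hTinj.comp hTinj)
    fun x => by
      rw [map_mul_apply hTinj hTinj, ← hTφ, ← hTφ, ← Equiv.Perm.mul_apply, ← sq, hsq]
      rfl
  have hs1 : s = 1 := by
    refine smul_left_injective F C.rep_nonzero ?_
    simpa [hTc] using (LinearMap.congr_fun hs C.rep).symm
  exact ⟨T, ⟨by rw [hs, hs1, one_smul], hTinj, hTφ⟩, hTc⟩

end IsCenterOf

theorem IsInvolWithCenter.exists_isInvolutiveLift (h2 : (2 : F) ≠ 0) {O : Set (Pt F)}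
    {φ : Equiv.Perm (Pt F)} {C : Pt F} (h : IsInvolWithCenter O φ C) :
    ∃ T, IsInvolutiveLift φ T ∧ ∀ v, T v = v ↔ v ∈ F ∙ C.rep := by
  obtain ⟨hmem, hsq, hne, hC⟩ := h
  obtain ⟨T, hT, hTc⟩ := hC.exists_isInvolutiveLift hmem.1 hsq
  have hT1 : T ≠ 1 := by
    rintro rfl
    refine hne (Equiv.ext fun x => ?_)
    induction x using ind with
    | h v hv => exact hT.map_eq _
  refine ⟨T, hT, fun v => ⟨End.mem_span_singleton_of_apply_eq_self h2 hT.mul_self hT1 hTc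
    (hC.apply_mem_span_pair hT.injective hT.map_eq), fun hv => ?_⟩⟩
  obtain ⟨a, rfl⟩ := mem_span_singleton.1 hv
  rw [map_smul, hTc]

theorem not_exists_line_of_span_eq_top {P Q R : Pt F}
    (hspan : span F {P.rep, Q.rep, R.rep} = ⊤) :
    ¬ ∃ l : Set (Pt F), IsLine l ∧ P ∈ l ∧ Q ∈ l ∧ R ∈ l := by
  rintro ⟨l, ⟨f, hf0, rfl⟩, hP, hQ, hR⟩
  exact hf0 (Dual.eq_zero_of_span_triple_eq_top hspan hP hQ hR)

theorem IsInvolutiveLift.apply_eq_self_of_mem_line {φ : Equiv.Perm (Pt F)}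
    {T : End F (Fin 3 → F)} (hT : IsInvolutiveLift φ T) {P Q R : Pt F}
    (hspan : span F {P.rep, Q.rep, R.rep} = ⊤) (hQ : T Q.rep = -Q.rep) (hR : T R.rep = -R.rep) :
    ∀ l : Set (Pt F), IsLine l → Q ∈ l → R ∈ l → ∀ x ∈ l, φ x = x := by
  rintro l ⟨f, hf0, rfl⟩ hQl hRl x hx
  simp only [Set.mem_ofPred_eq] at hQl hRl hx
  have hfP : f P.rep ≠ 0 := fun hP => hf0 (Dual.eq_zero_of_span_triple_eq_top hspan hP hQl hRl)
  obtain ⟨a, b, c, habc⟩ := mem_span_triple.1 (hspan ▸ mem_top : x.rep ∈ span F _)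
  have ha : a = 0 := by
    have hfx := congrArg f habc
    simp only [map_add, map_smul, smul_eq_mul, hQl, hRl, mul_zero, add_zero] at hfx
    exact (mul_eq_zero.1 (hfx.trans hx)).resolve_right hfP
  rw [hT.map_eq, ← mk_rep x, map_mk, mk_eq_mk_iff']
  refine ⟨-1, ?_⟩
  rw [← habc, ha]
  simp [hQ, hR]

theorem commuting_involutions_self_polar_triangle_general
    (F : Type) [Field F] [Fintype F] (hodd : Odd (Fintype.card F))
    (O : Set (Pt F))
    (αP αQ αR : Equiv.Perm (Pt F)) (P Q R : Pt F)
    (hP : IsInvolWithCenter O αP P) (hQ : IsInvolWithCenter O αQ Q) (hR : IsInvolWithCenter O αR R)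
    (hPQ : αP ≠ αQ) (hPR : αP ≠ αR) (hQR : αQ ≠ αR)
    (cPQ : Commute αP αQ) (cPR : Commute αP αR) (cQR : Commute αQ αR) :
    (¬ ∃ l : Set (Pt F), IsLine l ∧ P ∈ l ∧ Q ∈ l ∧ R ∈ l) ∧
      (∀ l : Set (Pt F), IsLine l → Q ∈ l → R ∈ l → ∀ x ∈ l, αP x = x) ∧
      (∀ l : Set (Pt F), IsLine l → P ∈ l → R ∈ l → ∀ x ∈ l, αQ x = x) ∧
      (∀ l : Set (Pt F), IsLine l → P ∈ l → Q ∈ l → ∀ x ∈ l, αR x = x) := by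
  have h2 : (2 : F) ≠ 0 := Ring.two_ne_zero fun h => by
    have := FiniteField.even_card_iff_char_two.1 h
    rw [Nat.odd_iff] at hodd
    omega
  have h3 : finrank F (Fin 3 → F) = 3 := finrank_fin_fun F
  have hodd3 : Odd (finrank F (Fin 3 → F)) := by rw [h3]; decide
  obtain ⟨TP, hTP, fixP⟩ := hP.exists_isInvolutiveLift h2
  obtain ⟨TQ, hTQ, fixQ⟩ := hQ.exists_isInvolutiveLift h2
  obtain ⟨TR, hTR, fixR⟩ := hR.exists_isInvolutiveLift h2
  obtain ⟨hQP, hPQ'⟩ := hTP.apply_eq_neg_of_commute h2 hodd3 hTQ hPQ cPQ P.rep_nonzero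
    Q.rep_nonzero fixP fixQ
  obtain ⟨hRP, hPR'⟩ := hTP.apply_eq_neg_of_commute h2 hodd3 hTR hPR cPR P.rep_nonzero
    R.rep_nonzero fixP fixR
  obtain ⟨hRQ, hQR'⟩ := hTQ.apply_eq_neg_of_commute h2 hodd3 hTR hQR cQR Q.rep_nonzero
    R.rep_nonzero fixQ fixR
  have hspan : span F {P.rep, Q.rep, R.rep} = ⊤ :=
    span_triple_eq_top_of_apply_eq_neg h2 h3 P.rep_nonzero Q.rep_nonzero R.rep_nonzero
      ((fixP _).2 (mem_span_singleton_self _)) hPQ' hPR'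
      ((fixQ _).2 (mem_span_singleton_self _)) hQR'
  exact ⟨not_exists_line_of_span_eq_top hspan, hTP.apply_eq_self_of_mem_line hspan hPQ' hPR',
    hTQ.apply_eq_self_of_mem_line (by rwa [Set.insert_comm]) hQP hQR',
    hTR.apply_eq_self_of_mem_line (by rwa [Set.insert_comm, Set.pair_comm]) hRP hRQ⟩

/-- Three pairwise distinct, pairwise commuting involutions of the stabilizer
of a non-degenerate conic have non-collinear centers, and the axis of each (its set of fixed
points contains the line) is the line joining the centers of the other two: the centers form a
self-polar triangle. -/
theorem commuting_involutions_self_polar_triangle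
    (F : Type) [Field F] [Fintype F] (hodd : Odd (Fintype.card F))
    (Qf : QuadraticForm F (Fin 3 → F))
    (hQf : ∀ v : Fin 3 → F, (∀ w, QuadraticMap.polar Qf v w = 0) → v = 0)
    (O : Set (Pt F)) (hO : O = {x : Pt F | Qf x.rep = 0})
    (αP αQ αR : Equiv.Perm (Pt F)) (P Q R : Pt F)
    (hP : IsInvolWithCenter O αP P) (hQ : IsInvolWithCenter O αQ Q) (hR : IsInvolWithCenter O αR R)
    (hPQ : αP ≠ αQ) (hPR : αP ≠ αR) (hQR : αQ ≠ αR)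
    (cPQ : Commute αP αQ) (cPR : Commute αP αR) (cQR : Commute αQ αR) :
    (¬ ∃ l : Set (Pt F), IsLine l ∧ P ∈ l ∧ Q ∈ l ∧ R ∈ l) ∧
      (∀ l : Set (Pt F), IsLine l → Q ∈ l → R ∈ l → ∀ x ∈ l, αP x = x) ∧
      (∀ l : Set (Pt F), IsLine l → P ∈ l → R ∈ l → ∀ x ∈ l, αQ x = x) ∧
      (∀ l : Set (Pt F), IsLine l → P ∈ l → Q ∈ l → ∀ x ∈ l, αR x = x) :=
  commuting_involutions_self_polar_triangle_general F hodd O αP αQ αR P Q R hP hQ hR hPQ hPR hQR cPQ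
    cPR cQR
end
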